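/- arXiv:2202.08587 — 4 statements merged into one kernel-verified Lean document; each statement's English description precedes it below -/
import Mathlib

section
/- Let f : ℝⁿ → ℝ be differentiable at θ, and let v be an ℝⁿ-valued random vector with independent components of mean 0 and variance 1. Then the forward gradient g(θ) = (∇f(θ) · v) v is an unbiased estimator of the gradient: E[g(θ)] = ∇f(θ). -/
open MeasureTheory ProbabilityTheory

/-! Independent components with mean zero are uncorrelated, so with unit variances
`E[v_i v_j] = δ_ij`, and by linearity `E[⟪a, v⟫ v_i] = a_i` for every fixed vector `a`.
The directional derivative `∇f(θ) · v` is `⟪∇f(θ), v⟫`; take `a = ∇f(θ)`. -/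

section Isotropic

variable {Ω ι : Type*} [MeasurableSpace Ω] {μ : Measure Ω} [DecidableEq ι]

theorem integral_mul_eq_ite_of_iIndepFun {X : ι → Ω → ℝ} (hL2 : ∀ i, MemLp (X i) 2 μ)
    (hindep : iIndepFun X μ) (hmean : ∀ i, ∫ ω, X i ω ∂μ = 0)
    (hvar : ∀ i, ∫ ω, X i ω ^ 2 ∂μ = 1) (i j : ι) :
    ∫ ω, X i ω * X j ω ∂μ = if i = j then 1 else 0 := by
  rcases eq_or_ne i j with rfl | hij
  · simpa [sq] using hvar i
  · rw [if_neg hij, (hindep.indepFun hij).integral_fun_mul_eq_mul_integral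
      (hL2 i).aestronglyMeasurable (hL2 j).aestronglyMeasurable, hmean i, zero_mul]

theorem integral_inner_mul_apply [Fintype ι] {v : Ω → EuclideanSpace ℝ ι}
    (hL2 : ∀ i, MemLp (fun ω => v ω i) 2 μ)
    (horth : ∀ i j, ∫ ω, v ω i * v ω j ∂μ = if i = j then 1 else 0)
    (a : EuclideanSpace ℝ ι) (i : ι) :
    ∫ ω, inner ℝ a (v ω) * v ω i ∂μ = a i := by
  have hint : ∀ j, Integrable (fun ω => v ω j * v ω i) μ :=
    fun j => (hL2 j).integrable_mul (hL2 i)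
  calc ∫ ω, inner ℝ a (v ω) * v ω i ∂μ
      = ∫ ω, ∑ j, a j * (v ω j * v ω i) ∂μ := by
        simp only [PiLp.inner_apply, Real.inner_apply, Finset.sum_mul, mul_assoc]
    _ = ∑ j, a j * ∫ ω, v ω j * v ω i ∂μ := by
        rw [integral_finsetSum _ fun j _ => (hint j).const_mul _]
        simp only [integral_const_mul]
    _ = a i := by simp [horth]

end Isotropic

theorem forward_gradient_unbiased_general
    {Ω : Type*} [MeasurableSpace Ω] {μ : Measure Ω}
    {n : ℕ} (f : EuclideanSpace ℝ (Fin n) → ℝ) (θ : EuclideanSpace ℝ (Fin n))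
    (v : Ω → EuclideanSpace ℝ (Fin n))
    (hL2 : ∀ i, MemLp (fun ω => v ω i) 2 μ)
    (hindep : iIndepFun (m := fun _ => Real.measurableSpace) (fun i ω => v ω i) μ)
    (hmean : ∀ i, ∫ ω, v ω i ∂μ = 0)
    (hvar : ∀ i, ∫ ω, (v ω i) ^ 2 ∂μ = 1) :
    ∀ i, ∫ ω, (fderiv ℝ f θ (v ω)) * v ω i ∂μ = gradient f θ i := by
  intro i
  rw [← toDual_gradient]
  exact integral_inner_mul_apply hL2
    (integral_mul_eq_ite_of_iIndepFun hL2 hindep hmean hvar) _ i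

/-- If `f : ℝⁿ → ℝ` is differentiable at `θ` and `v` is a random vector with
independent components of mean 0 and variance 1, then the forward gradient
`g(θ) = (∇f(θ) · v) v` is an unbiased estimator of the gradient `∇f(θ)`.
Here `∇f(θ) · v` is the directional derivative `fderiv ℝ f θ (v ω)`. -/
theorem forward_gradient_unbiased
    {Ω : Type*} [MeasurableSpace Ω] {μ : Measure Ω} [IsProbabilityMeasure μ]
    {n : ℕ} (f : EuclideanSpace ℝ (Fin n) → ℝ) (θ : EuclideanSpace ℝ (Fin n))
    (hf : DifferentiableAt ℝ f θ)
    (v : Ω → EuclideanSpace ℝ (Fin n))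
    (hmeas : ∀ i, Measurable fun ω => v ω i)
    (hL2 : ∀ i, MemLp (fun ω => v ω i) 2 μ)
    (hindep : iIndepFun (m := fun _ => Real.measurableSpace) (fun i ω => v ω i) μ)
    (hmean : ∀ i, ∫ ω, v ω i ∂μ = 0)
    (hvar : ∀ i, ∫ ω, (v ω i) ^ 2 ∂μ = 1) :
    ∀ i, ∫ ω, (fderiv ℝ f θ (v ω)) * v ω i ∂μ = gradient f θ i :=
  forward_gradient_unbiased_general f θ v hL2 hindep hmean hvar
end

section
/- For a ∈ ℝⁿ fixed and v with independent components of mean 0, variance 1, and finite fourth moment E[v_i⁴] = m₄ (same for all i), the second moment of the i-th component of the forward gradient g = (a·v)v is E[g_i²] = m₄ a_i² + Σ_{j≠i} a_j² (in particular Var[g_i] = (m₄−1) a_i² + Σ_{j≠i} a_j²). -/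
/-!
Expand `g_i² = ∑_{j,k} a_j a_k v_j v_k v_i²`. An off-diagonal term `j ≠ k` has expectation zero:
one of `j, k` differs from both other indices, and that centred factor is independent of the
product of the others. A diagonal term gives `a_j² E[v_j²] E[v_i²] = a_j²` for `j ≠ i` and
`a_i² E[v_i⁴]` for `j = i`. In the same way `E[g_i] = a_i`, and the variance follows.
-/

open MeasureTheory ProbabilityTheory Finset
open scoped ENNReal

instance ENNReal.holderTriple_four_four_two : ENNReal.HolderTriple 4 4 2 :=
  ⟨by
    rw [← two_mul, show (4 : ℝ≥0∞) = 2 * 2 by norm_num, ENNReal.mul_inv (by simp) (by simp),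
      ← mul_assoc, ENNReal.mul_inv_cancel (by simp) (by simp), one_mul]⟩

lemma MeasureTheory.MemLp.integrable_mul_mul_mul {Ω : Type*} [MeasurableSpace Ω] {μ : Measure Ω}
    {f g h k : Ω → ℝ} (hf : MemLp f 4 μ) (hg : MemLp g 4 μ) (hh : MemLp h 4 μ)
    (hk : MemLp k 4 μ) :
    Integrable (fun ω => f ω * g ω * (h ω * k ω)) μ :=
  (hg.mul' hf (r := 2)).integrable_mul (hk.mul' hh (r := 2))

section

variable {Ω ι : Type*} [MeasurableSpace Ω] {μ : Measure Ω}

lemma integral_mul_eq_zero_of_indepFun {Y Z : Ω → ℝ} (hYZ : IndepFun Y Z μ)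
    (hY : AEStronglyMeasurable Y μ) (hZ : AEStronglyMeasurable Z μ) (hY₀ : ∫ ω, Y ω ∂μ = 0) :
    ∫ ω, Y ω * Z ω ∂μ = 0 := by
  rw [hYZ.integral_fun_mul_eq_mul_integral hY hZ, hY₀, zero_mul]

lemma integral_sum_mul_eq_sum_mul_integral [Fintype ι] (a : ι → ℝ) (X : ι → Ω → ℝ) (Y : Ω → ℝ)
    (hXY : ∀ j, Integrable (fun ω => X j ω * Y ω) μ) :
    ∫ ω, (∑ j, a j * X j ω) * Y ω ∂μ = ∑ j, a j * ∫ ω, X j ω * Y ω ∂μ := by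
  simp_rw [Finset.sum_mul, mul_assoc]
  rw [integral_finsetSum _ fun j _ => (hXY j).const_mul (a j)]
  simp_rw [integral_const_mul]

lemma integral_sq_sum_mul_eq_sum_sum [Fintype ι] (a : ι → ℝ) (X : ι → Ω → ℝ) (Y : Ω → ℝ)
    (hXY : ∀ j k, Integrable (fun ω => X j ω * X k ω * Y ω ^ 2) μ) :
    ∫ ω, ((∑ j, a j * X j ω) * Y ω) ^ 2 ∂μ
      = ∑ j, ∑ k, a j * a k * ∫ ω, X j ω * X k ω * Y ω ^ 2 ∂μ := by
  have hexpand : ∀ ω, ((∑ j, a j * X j ω) * Y ω) ^ 2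
      = ∑ j, ∑ k, a j * a k * (X j ω * X k ω * Y ω ^ 2) := fun ω => by
    rw [mul_pow, sq, Finset.sum_mul_sum, Finset.sum_mul]
    refine Finset.sum_congr rfl fun j _ => ?_
    rw [Finset.sum_mul]
    exact Finset.sum_congr rfl fun k _ => by ring
  simp_rw [hexpand]
  rw [integral_finsetSum _ fun j _ => integrable_finsetSum _ fun k _ => (hXY j k).const_mul _]
  refine Finset.sum_congr rfl fun j _ => ?_
  rw [integral_finsetSum _ fun k _ => (hXY j k).const_mul _]
  simp_rw [integral_const_mul]

namespace ProbabilityTheory.iIndepFun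

variable {X : ι → Ω → ℝ}

lemma integral_mul_eq_ite [DecidableEq ι] (hindep : iIndepFun X μ)
    (hX : ∀ i, AEStronglyMeasurable (X i) μ) (hmean : ∀ i, ∫ ω, X i ω ∂μ = 0)
    (hvar : ∀ i, ∫ ω, X i ω ^ 2 ∂μ = 1) (j i : ι) :
    ∫ ω, X j ω * X i ω ∂μ = if j = i then 1 else 0 := by
  split_ifs with hji
  · subst hji
    simpa only [sq] using hvar j
  · exact integral_mul_eq_zero_of_indepFun (hindep.indepFun hji) (hX j) (hX i) (hmean j)

lemma integral_mul_mul_sq_of_ne (hindep : iIndepFun X μ)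
    (hX : ∀ i, AEStronglyMeasurable (X i) μ) (hmean : ∀ i, ∫ ω, X i ω ∂μ = 0) {i j k : ι}
    (hjk : j ≠ k) (hji : j ≠ i) :
    ∫ ω, X j ω * X k ω * X i ω ^ 2 ∂μ = 0 := by
  have hpair : IndepFun (X j) (fun ω => X k ω * X i ω ^ 2) μ :=
    ((hindep.indepFun_prodMk₀ (fun l => (hX l).aemeasurable) k i j hjk.symm hji.symm).comp
      (show Measurable fun p : ℝ × ℝ => p.1 * p.2 ^ 2 by fun_prop) measurable_id).symm
  simp_rw [mul_assoc]
  exact integral_mul_eq_zero_of_indepFun hpair (hX j)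
    ((hX k).mul ((hX i).pow 2)) (hmean j)

lemma integral_mul_mul_sq [DecidableEq ι] (hindep : iIndepFun X μ)
    (hX : ∀ i, AEStronglyMeasurable (X i) μ) (hmean : ∀ i, ∫ ω, X i ω ∂μ = 0)
    (hvar : ∀ i, ∫ ω, X i ω ^ 2 ∂μ = 1) (i j k : ι) :
    ∫ ω, X j ω * X k ω * X i ω ^ 2 ∂μ
      = if j = k then (if j = i then ∫ ω, X i ω ^ 4 ∂μ else 1) else 0 := by
  split_ifs with hjk hji
  · subst hjk hji
    ring_nf
  · subst hjk
    have hsq : IndepFun (fun ω => X j ω ^ 2) (fun ω => X i ω ^ 2) μ :=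
      (hindep.indepFun hji).comp (measurable_id.pow_const 2) (measurable_id.pow_const 2)
    simp_rw [← sq]
    rw [hsq.integral_fun_mul_eq_mul_integral ((hX j).pow 2) ((hX i).pow 2)]
    simp only [hvar, mul_one]
  · by_cases hji : j = i
    · subst hji
      simp_rw [mul_comm (X j _) (X k _)]
      exact integral_mul_mul_sq_of_ne hindep hX hmean (Ne.symm hjk) (Ne.symm hjk)
    · exact integral_mul_mul_sq_of_ne hindep hX hmean hjk hji

variable [Fintype ι] [DecidableEq ι]

lemma integral_sum_mul (hindep : iIndepFun X μ) (hX : ∀ i, MemLp (X i) 2 μ)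
    (hmean : ∀ i, ∫ ω, X i ω ∂μ = 0) (hvar : ∀ i, ∫ ω, X i ω ^ 2 ∂μ = 1) (a : ι → ℝ) (i : ι) :
    ∫ ω, (∑ j, a j * X j ω) * X i ω ∂μ = a i := by
  rw [integral_sum_mul_eq_sum_mul_integral a X (X i) fun j => (hX j).integrable_mul (hX i)]
  simp [hindep.integral_mul_eq_ite (fun l => (hX l).aestronglyMeasurable) hmean hvar]

lemma integral_sum_mul_sq (hindep : iIndepFun X μ) (hX : ∀ i, MemLp (X i) 4 μ)
    (hmean : ∀ i, ∫ ω, X i ω ∂μ = 0) (hvar : ∀ i, ∫ ω, X i ω ^ 2 ∂μ = 1) (a : ι → ℝ) (i : ι) :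
    ∫ ω, ((∑ j, a j * X j ω) * X i ω) ^ 2 ∂μ
      = (∫ ω, X i ω ^ 4 ∂μ) * a i ^ 2 + ∑ j ∈ univ.erase i, a j ^ 2 := by
  have hint : ∀ j k, Integrable (fun ω => X j ω * X k ω * X i ω ^ 2) μ := fun j k => by
    simpa only [sq] using (hX j).integrable_mul_mul_mul (hX k) (hX i) (hX i)
  rw [integral_sq_sum_mul_eq_sum_sum a X (X i) hint, ← Finset.add_sum_erase _ _ (mem_univ i)]
  simp only [hindep.integral_mul_mul_sq (fun l => (hX l).aestronglyMeasurable) hmean hvar,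
    mul_ite, mul_zero, Finset.sum_ite_eq, mem_univ, if_true]
  refine congrArg₂ (· + ·) (by ring) (Finset.sum_congr rfl fun j hj => ?_)
  rw [if_neg (ne_of_mem_erase hj), mul_one, sq]

lemma variance_sum_mul [IsProbabilityMeasure μ] (hindep : iIndepFun X μ)
    (hX : ∀ i, MemLp (X i) 4 μ) (hmean : ∀ i, ∫ ω, X i ω ∂μ = 0)
    (hvar : ∀ i, ∫ ω, X i ω ^ 2 ∂μ = 1) (a : ι → ℝ) (i : ι) :
    variance (fun ω => (∑ j, a j * X j ω) * X i ω) μ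
      = (∫ ω, X i ω ^ 4 ∂μ - 1) * a i ^ 2 + ∑ j ∈ univ.erase i, a j ^ 2 := by
  have hL2 : MemLp (fun ω => (∑ j, a j * X j ω) * X i ω) 2 μ :=
    (hX i).mul' (memLp_finsetSum univ fun j _ => (hX j).const_mul (a j))
  rw [variance_eq_sub hL2]
  simp only [Pi.pow_apply]
  rw [hindep.integral_sum_mul_sq hX hmean hvar,
    hindep.integral_sum_mul (fun l => (hX l).mono_exponent (by norm_num)) hmean hvar]
  ring

end ProbabilityTheory.iIndepFun

end

theorem forward_gradient_second_moment_general
    {Ω : Type*} [MeasurableSpace Ω] {μ : Measure Ω} [IsProbabilityMeasure μ]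
    {n : ℕ} (a : Fin n → ℝ) (v : Ω → Fin n → ℝ) (m₄ : ℝ)
    (hL4 : ∀ i, MemLp (fun ω => v ω i) 4 μ)
    (hindep : iIndepFun (m := fun _ => Real.measurableSpace) (fun i ω => v ω i) μ)
    (hmean : ∀ i, ∫ ω, v ω i ∂μ = 0)
    (hvar : ∀ i, ∫ ω, (v ω i) ^ 2 ∂μ = 1)
    (hfourth : ∀ i, ∫ ω, (v ω i) ^ 4 ∂μ = m₄) :
    ∀ i, (∫ ω, ((∑ j, a j * v ω j) * v ω i) ^ 2 ∂μ
            = m₄ * (a i) ^ 2 + ∑ j ∈ Finset.univ.erase i, (a j) ^ 2)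
      ∧ (variance (fun ω => (∑ j, a j * v ω j) * v ω i) μ
            = (m₄ - 1) * (a i) ^ 2 + ∑ j ∈ Finset.univ.erase i, (a j) ^ 2) := by
  intro i
  have hsecond := hindep.integral_sum_mul_sq hL4 hmean hvar a i
  have hvariance := hindep.variance_sum_mul hL4 hmean hvar a i
  rw [hfourth] at hsecond hvariance
  exact ⟨hsecond, hvariance⟩

/-- For `a ∈ ℝⁿ` fixed and `v` with independent components of mean 0,
variance 1, vanishing third moment and fourth moment `m₄`, the `i`-th
component `g_i = (a·v) v_i` of the forward gradient satisfies
`E[g_i²] = m₄ a_i² + Σ_{j≠i} a_j²` and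
`Var[g_i] = (m₄ − 1) a_i² + Σ_{j≠i} a_j²`. -/
theorem forward_gradient_second_moment
    {Ω : Type*} [MeasurableSpace Ω] {μ : Measure Ω} [IsProbabilityMeasure μ]
    {n : ℕ} (a : Fin n → ℝ) (v : Ω → Fin n → ℝ) (m₄ : ℝ)
    (hmeas : ∀ i, Measurable fun ω => v ω i)
    (hL4 : ∀ i, MemLp (fun ω => v ω i) 4 μ)
    (hindep : iIndepFun (m := fun _ => Real.measurableSpace) (fun i ω => v ω i) μ)
    (hmean : ∀ i, ∫ ω, v ω i ∂μ = 0)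
    (hvar : ∀ i, ∫ ω, (v ω i) ^ 2 ∂μ = 1)
    (hthird : ∀ i, ∫ ω, (v ω i) ^ 3 ∂μ = 0)
    (hfourth : ∀ i, ∫ ω, (v ω i) ^ 4 ∂μ = m₄) :
    ∀ i, (∫ ω, ((∑ j, a j * v ω j) * v ω i) ^ 2 ∂μ
            = m₄ * (a i) ^ 2 + ∑ j ∈ Finset.univ.erase i, (a j) ^ 2)
      ∧ (variance (fun ω => (∑ j, a j * v ω j) * v ω i) μ
            = (m₄ - 1) * (a i) ^ 2 + ∑ j ∈ Finset.univ.erase i, (a j) ^ 2) :=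
  forward_gradient_second_moment_general a v m₄ hL4 hindep hmean hvar hfourth
end

section
/- For v ~ N(0, I_n) and a ∈ ℝⁿ, the expected squared norm of the forward gradient g = (a·v)v satisfies E[‖g‖²] = (n + 2)‖a‖². -/
/-!
Expanding the square, `∑ᵢ ((a·v) vᵢ)² = ∑ᵢ ∑ⱼ ∑ₖ aⱼ aₖ vⱼ vₖ vᵢ²`. By independence each
`E[vⱼ vₖ vᵢ²]` factors into one-dimensional moments; when `j ≠ k` one factor is a first moment,
hence zero, and otherwise it is `E[vᵢ⁴] = 3` or `E[vⱼ²] E[vᵢ²] = 1`. Summing gives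
`(n - 1 + 3) ‖a‖²`. The Gaussian moments come from Stein's recursion
`E[X^(k+2)] = (k+1) v E[X^k]` for `X ~ N(0, v)`, an integration by parts against `φ' = -x φ / v`.
-/

open MeasureTheory ProbabilityTheory Finset
open scoped NNReal

namespace ProbabilityTheory

lemma integrable_pow_gaussianReal (μ : ℝ) (v : ℝ≥0) (k : ℕ) :
    Integrable (fun x => x ^ k) (gaussianReal μ v) := by
  have := (memLp_id_gaussianReal (μ := μ) (v := v) k).integrable_norm_pow'
  exact (integrable_norm_iff (by fun_prop)).mp (by simpa [norm_pow] using this)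

lemma hasDerivAt_gaussianPDFReal_zero (v : ℝ≥0) (x : ℝ) :
    HasDerivAt (gaussianPDFReal 0 v) (-(x / v) * gaussianPDFReal 0 v x) x := by
  simp only [gaussianPDFReal_def, sub_zero]
  refine (((hasDerivAt_pow 2 x).neg.div_const (2 * (v : ℝ))).exp.const_mul _).congr_deriv ?_
  simp only [Pi.neg_apply, Nat.cast_ofNat]
  ring

lemma integrable_gaussianPDFReal_mul_iff {μ : ℝ} {v : ℝ≥0} (hv : v ≠ 0) {f : ℝ → ℝ} :
    Integrable (fun x => gaussianPDFReal μ v x * f x) ↔ Integrable f (gaussianReal μ v) := by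
  rw [gaussianReal_of_var_ne_zero _ hv, integrable_withDensity_iff_integrable_smul'
    (measurable_gaussianPDF μ v) (ae_of_all _ fun _ => gaussianPDF_lt_top)]
  simp [gaussianPDF, ENNReal.toReal_ofReal (gaussianPDFReal_nonneg μ v _)]

theorem integral_pow_add_two_gaussianReal (v : ℝ≥0) (k : ℕ) :
    ∫ x, x ^ (k + 2) ∂gaussianReal 0 v = (k + 1) * v * ∫ x, x ^ k ∂gaussianReal 0 v := by
  rcases eq_or_ne v 0 with rfl | hv
  · simp
  have hv' : (v : ℝ) ≠ 0 := by exact_mod_cast hv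
  have hint {f : ℝ → ℝ} (hf : Integrable f (gaussianReal 0 v)) :
      Integrable (fun x => gaussianPDFReal 0 v x * f x) :=
    (integrable_gaussianPDFReal_mul_iff hv).mpr hf
  have hparts := integral_mul_deriv_eq_deriv_mul_of_integrable
    (u := fun x : ℝ => x ^ (k + 1)) (u' := fun x => (k + 1) * x ^ k)
    (v := gaussianPDFReal 0 v) (v' := fun x => -(x / v) * gaussianPDFReal 0 v x)
    (fun x _ => by simpa using hasDerivAt_pow (k + 1) x)
    (fun x _ => hasDerivAt_gaussianPDFReal_zero v x)
    ((hint ((integrable_pow_gaussianReal 0 v (k + 2)).div_const v).neg).congr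
      (ae_of_all _ fun x => by simp only [Pi.mul_apply, Pi.neg_apply]; ring))
    ((hint ((integrable_pow_gaussianReal 0 v k).const_mul (k + 1))).congr
      (ae_of_all _ fun x => by simp only [Pi.mul_apply]; ring))
    ((hint (integrable_pow_gaussianReal 0 v (k + 1))).congr
      (ae_of_all _ fun x => by simp only [Pi.mul_apply]; ring))
  rw [show (fun x => x ^ (k + 1) * (-(x / v) * gaussianPDFReal 0 v x))
      = fun x => -(v : ℝ)⁻¹ * (gaussianPDFReal 0 v x * x ^ (k + 2)) by ext; ring,
    show (fun x => ((k : ℝ) + 1) * x ^ k * gaussianPDFReal 0 v x)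
      = fun x => ((k : ℝ) + 1) * (gaussianPDFReal 0 v x * x ^ k) by ext; ring,
    integral_const_mul, integral_const_mul] at hparts
  field_simp at hparts
  simp only [integral_gaussianReal_eq_integral_smul hv, smul_eq_mul]
  linarith

lemma integral_sq_gaussianReal (v : ℝ≥0) : ∫ x, x ^ 2 ∂gaussianReal 0 v = v := by
  simpa using integral_pow_add_two_gaussianReal v 0

lemma integral_pow_four_gaussianReal (v : ℝ≥0) :
    ∫ x, x ^ 4 ∂gaussianReal 0 v = 3 * v ^ 2 := by
  rw [integral_pow_add_two_gaussianReal v 2, integral_sq_gaussianReal]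
  norm_num
  ring

end ProbabilityTheory

section ProductMeasure

variable {ι : Type*} [Fintype ι] {ν : Measure ℝ}

lemma integral_prod_pow_pi [SigmaFinite ν] (e : ι → ℕ) :
    ∫ x, ∏ l, x l ^ e l ∂Measure.pi (fun _ => ν) = ∏ l, ∫ t, t ^ e l ∂ν :=
  integral_fintype_prod_eq_prod fun l t => t ^ e l

variable [DecidableEq ι]

lemma prod_pow_single_add_single_add_single (x : ι → ℝ) (i j k : ι) :
    ∏ l, x l ^ (Pi.single j 1 + Pi.single k 1 + Pi.single i 2 : ι → ℕ) l
      = x j * x k * x i ^ 2 := by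
  simp only [Pi.add_apply, pow_add, prod_mul_distrib, Pi.single_apply, pow_ite, pow_zero,
    prod_ite_eq', mem_univ, if_true, pow_one]

lemma integrable_mul_mul_sq_pi [SigmaFinite ν]
    (hν : ∀ k : ℕ, Integrable (fun t : ℝ => t ^ k) ν) (i j k : ι) :
    Integrable (fun x : ι → ℝ => x j * x k * x i ^ 2) (Measure.pi fun _ => ν) := by
  simp_rw [← prod_pow_single_add_single_add_single]
  exact Integrable.fintype_prod fun l => hν _

lemma integral_mul_mul_sq_pi [IsProbabilityMeasure ν] (h1 : ∫ t, t ∂ν = 0)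
    (h2 : ∫ t, t ^ 2 ∂ν = 1) (i j k : ι) :
    ∫ x, x j * x k * x i ^ 2 ∂Measure.pi (fun _ => ν)
      = if j = k then (if i = j then ∫ t, t ^ 4 ∂ν else 1) else 0 := by
  simp_rw [← prod_pow_single_add_single_add_single, integral_prod_pow_pi]
  by_cases hjk : j = k
  · subst hjk
    by_cases hij : i = j
    · subst hij
      rw [if_pos rfl, if_pos rfl, Fintype.prod_eq_single i fun l hl => by simp [hl]]
      simp
    · rw [if_pos rfl, if_neg hij,
        prod_eq_mul i j hij (fun l _ hl => by simp [hl]) (by simp) (by simp)]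
      simp [hij, Ne.symm hij, h2]
  · rw [if_neg hjk]
    -- the coordinate among `j, k` that differs from `i` occurs to the first power
    refine prod_eq_zero (mem_univ (if j = i then k else j)) ?_
    split_ifs with hji
    · subst hji
      simp [Ne.symm hjk, h1]
    · simp [hji, hjk, h1]

lemma sum_sum_sum_mul_ite (a : ι → ℝ) (c : ℝ) :
    ∑ i, ∑ j, ∑ k, a j * a k * (if j = k then (if i = j then c else 1) else 0)
      = (Fintype.card ι - 1 + c) * ∑ i, a i ^ 2 := by
  have hdiag (i j : ι) : (if i = j then a j * a j * c else a j * a j * 1)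
      = a j ^ 2 + if i = j then (c - 1) * a j ^ 2 else 0 := by
    split_ifs <;> ring
  simp only [mul_ite, mul_zero, sum_ite_eq, mem_univ, if_true, hdiag, sum_add_distrib,
    sum_const, card_univ, nsmul_eq_mul, ← mul_sum]
  ring

theorem integral_sum_sq_dotProduct_mul_pi [IsProbabilityMeasure ν]
    (hν : ∀ k : ℕ, Integrable (fun t : ℝ => t ^ k) ν)
    (h1 : ∫ t, t ∂ν = 0) (h2 : ∫ t, t ^ 2 ∂ν = 1) (a : ι → ℝ) :
    ∫ x, ∑ i, ((∑ j, a j * x j) * x i) ^ 2 ∂Measure.pi (fun _ => ν)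
      = (Fintype.card ι - 1 + ∫ t, t ^ 4 ∂ν) * ∑ i, a i ^ 2 := by
  have expand (x : ι → ℝ) : ∑ i, ((∑ j, a j * x j) * x i) ^ 2
      = ∑ i, ∑ j, ∑ k, a j * a k * (x j * x k * x i ^ 2) := by
    simp_rw [mul_pow, sq (∑ j, a j * x j), sum_mul_sum, sum_mul]
    exact sum_congr rfl fun i _ => sum_congr rfl fun j _ => sum_congr rfl fun k _ => by ring
  have hint (i j k : ι) := (integrable_mul_mul_sq_pi hν i j k).const_mul (a j * a k)
  simp_rw [expand]
  rw [integral_finsetSum _ fun i _ => integrable_finsetSum _ fun j _ =>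
    integrable_finsetSum _ fun k _ => hint i j k]
  simp_rw [integral_finsetSum _ fun j _ => integrable_finsetSum _ fun k _ => hint _ j k,
    integral_finsetSum _ fun k _ => hint _ _ k, integral_const_mul,
    integral_mul_mul_sq_pi h1 h2]
  exact sum_sum_sum_mul_ite a _

end ProductMeasure

theorem gaussian_forward_gradient_norm_sq_general
    {Ω : Type*} [MeasurableSpace Ω] {μ : Measure Ω}
    {n : ℕ} (a : Fin n → ℝ) (v : Ω → Fin n → ℝ)
    (hmeas : ∀ i, Measurable fun ω => v ω i)
    (hindep : iIndepFun (fun i ω => v ω i) μ)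
    (hlaw : ∀ i, Measure.map (fun ω => v ω i) μ = gaussianReal 0 1) :
    ∫ ω, ∑ i, ((∑ j, a j * v ω j) * v ω i) ^ 2 ∂μ
      = ((n : ℝ) + 2) * ∑ i, (a i) ^ 2 := by
  have hlaw_v : μ.map v = Measure.pi fun _ => gaussianReal 0 1 := by
    simpa [hlaw] using hindep.map_fun_eq_pi_map fun i => (hmeas i).aemeasurable
  rw [← integral_map (f := fun x => ∑ i, ((∑ j, a j * x j) * x i) ^ 2)
      (measurable_pi_lambda _ hmeas).aemeasurable (by fun_prop), hlaw_v,
    integral_sum_sq_dotProduct_mul_pi (integrable_pow_gaussianReal 0 1) integral_id_gaussianReal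
      (integral_sq_gaussianReal 1), integral_pow_four_gaussianReal, Fintype.card_fin]
  push_cast
  ring

/-- For `v ~ N(0, I_n)` and `a ∈ ℝⁿ`, the expected squared norm of the forward
gradient `g = (a·v) v` satisfies `E[‖g‖²] = (n + 2) ‖a‖²`. -/
theorem gaussian_forward_gradient_norm_sq
    {Ω : Type*} [MeasurableSpace Ω] {μ : Measure Ω} [IsProbabilityMeasure μ]
    {n : ℕ} (a : Fin n → ℝ) (v : Ω → Fin n → ℝ)
    (hmeas : ∀ i, Measurable fun ω => v ω i)
    (hindep : iIndepFun (fun i ω => v ω i) μ)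
    (hlaw : ∀ i, Measure.map (fun ω => v ω i) μ = gaussianReal 0 1) :
    ∫ ω, ∑ i, ((∑ j, a j * v ω j) * v ω i) ^ 2 ∂μ
      = ((n : ℝ) + 2) * ∑ i, (a i) ^ 2 :=
  gaussian_forward_gradient_norm_sq_general a v hmeas hindep hlaw
end

section
/- Let f(θ) = (1/2)‖θ‖² on ℝⁿ. For the forward gradient update θ' = θ − η(∇f(θ)·v)v with v ~ N(0, I_n) and step size η > 0, the expected squared norm satisfies E[‖θ'‖²] = (1 − 2η + η²(n+2))‖θ‖²; in particular, for 0 < η < 2/(n+2) the iteration contracts in expectation. -/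
/-!
Write `s = ∑ j, θ j * v j`. Expanding the square,
`∑ i, (θ i - η s v i)² = ‖θ‖² - 2η s² + η² ∑ i, s² (v i)²`.
For independent centred coordinates of unit variance, `E[v j v k] = δ_jk`, and `E[v j v k (v i)²]`
vanishes unless `j = k`, where it is `1`, or the fourth moment `m₄` when also `j = i`. Hence
`E s² = ‖θ‖²` and `E[s² (v i)²] = ‖θ‖² + (m₄ - 1) (θ i)²`, which gives the factor
`1 - 2η + η² (n + m₄ - 1)`. For the standard Gaussian `m₄ = 3`, the fourth derivative at `0` of its
moment generating function `exp (t² / 2)`.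
-/

open MeasureTheory ProbabilityTheory
open scoped NNReal ENNReal

lemma MeasureTheory.MemLp.integrable_mul_mul_sq {Ω : Type*} [MeasurableSpace Ω] {μ : Measure Ω}
    {f g h : Ω → ℝ} (hf : MemLp f 4 μ) (hg : MemLp g 4 μ) (hh : MemLp h 4 μ) :
    Integrable (fun ω ↦ f ω * g ω * h ω ^ 2) μ := by
  have : ENNReal.HolderTriple 4 4 2 := ⟨by
    rw [← two_mul, show (4 : ℝ≥0∞) = 2 * 2 by norm_num, ENNReal.mul_inv (by simp) (by simp),
      ← mul_assoc, ENNReal.mul_inv_cancel (by simp) (by simp), one_mul]⟩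
  refine ((hg.mul (r := 2) hf).integrable_mul (hh.mul (r := 2) hh)).congr
    (ae_of_all _ fun ω ↦ ?_)
  simp only [Pi.mul_apply]
  ring

section IndependentCoordinates

variable {Ω ι : Type*} [MeasurableSpace Ω] {μ : Measure Ω} {X : ι → Ω → ℝ}

lemma integral_sq_sum_mul_eq_sum_sq_mul [Fintype ι] [DecidableEq ι] (θ c : ι → ℝ) (Z : Ω → ℝ)
    (hint : ∀ j k, Integrable (fun ω ↦ X j ω * X k ω * Z ω) μ)
    (hmom : ∀ j k, ∫ ω, X j ω * X k ω * Z ω ∂μ = if j = k then c j else 0) :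
    ∫ ω, (∑ j, θ j * X j ω) ^ 2 * Z ω ∂μ = ∑ j, θ j ^ 2 * c j := by
  have expand : ∀ ω, (∑ j, θ j * X j ω) ^ 2 * Z ω
      = ∑ j, ∑ k, θ j * θ k * (X j ω * X k ω * Z ω) := fun ω ↦ by
    rw [sq, Finset.sum_mul_sum, Finset.sum_mul]
    refine Finset.sum_congr rfl fun j _ ↦ ?_
    rw [Finset.sum_mul]
    exact Finset.sum_congr rfl fun k _ ↦ by ring
  simp_rw [expand]
  rw [integral_finsetSum _ fun j _ ↦ integrable_finsetSum _ fun k _ ↦ (hint j k).const_mul _]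
  refine Finset.sum_congr rfl fun j _ ↦ ?_
  rw [integral_finsetSum _ fun k _ ↦ (hint j k).const_mul _]
  simp [integral_const_mul, hmom, sq]

lemma integral_mul_eq_ite [DecidableEq ι] (hmeas : ∀ i, Measurable (X i))
    (hindep : iIndepFun X μ) (hmean : ∀ i, ∫ ω, X i ω ∂μ = 0)
    (hvar : ∀ i, ∫ ω, X i ω ^ 2 ∂μ = 1) (j k : ι) :
    ∫ ω, X j ω * X k ω ∂μ = if j = k then 1 else 0 := by
  rcases eq_or_ne j k with rfl | hjk
  · simp [← hvar j, sq]
  · rw [if_neg hjk, (hindep.indepFun hjk).integral_fun_mul_eq_mul_integral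
      (hmeas j).aestronglyMeasurable (hmeas k).aestronglyMeasurable, hmean, zero_mul]

lemma integral_mul_mul_sq_eq_zero (hmeas : ∀ i, Measurable (X i)) (hindep : iIndepFun X μ)
    (hmean : ∀ i, ∫ ω, X i ω ∂μ = 0) {i j k : ι} (hjk : j ≠ k) (hji : j ≠ i) :
    ∫ ω, X j ω * X k ω * X i ω ^ 2 ∂μ = 0 := by
  have hind : IndepFun (X j) (fun ω ↦ X k ω * X i ω ^ 2) μ :=
    (hindep.indepFun_prodMk hmeas k i j hjk.symm hji.symm).symm.comp measurable_id
      (measurable_fst.mul (measurable_snd.pow_const 2))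
  simp_rw [mul_assoc]
  rw [hind.integral_fun_mul_eq_mul_integral (hmeas j).aestronglyMeasurable
    ((hmeas k).mul ((hmeas i).pow_const 2)).aestronglyMeasurable, hmean, zero_mul]

lemma integral_mul_mul_sq_eq_ite [DecidableEq ι] {m₄ : ℝ} (hmeas : ∀ i, Measurable (X i))
    (hindep : iIndepFun X μ) (hmean : ∀ i, ∫ ω, X i ω ∂μ = 0)
    (hvar : ∀ i, ∫ ω, X i ω ^ 2 ∂μ = 1) (hfourth : ∀ i, ∫ ω, X i ω ^ 4 ∂μ = m₄) (i j k : ι) :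
    ∫ ω, X j ω * X k ω * X i ω ^ 2 ∂μ = if j = k then (if j = i then m₄ else 1) else 0 := by
  rcases eq_or_ne j k with rfl | hjk
  · rcases eq_or_ne j i with rfl | hji
    · rw [if_pos rfl, if_pos rfl, ← hfourth j]
      congr 1 with ω
      ring
    · have hind : IndepFun (fun ω ↦ X j ω ^ 2) (fun ω ↦ X i ω ^ 2) μ :=
        (hindep.indepFun hji).comp (measurable_id.pow_const 2) (measurable_id.pow_const 2)
      rw [if_pos rfl, if_neg hji]
      simp_rw [← sq]
      rw [hind.integral_fun_mul_eq_mul_integral ((hmeas j).pow_const 2).aestronglyMeasurable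
        ((hmeas i).pow_const 2).aestronglyMeasurable, hvar, hvar, one_mul]
  · rw [if_neg hjk]
    rcases eq_or_ne j i with rfl | hji
    · simp_rw [mul_comm (X j _) (X k _)]
      exact integral_mul_mul_sq_eq_zero hmeas hindep hmean hjk.symm hjk.symm
    · exact integral_mul_mul_sq_eq_zero hmeas hindep hmean hjk hji

lemma integral_sq_sum_mul_eq_sum_sq [Fintype ι] (hmeas : ∀ i, Measurable (X i))
    (hindep : iIndepFun X μ) (hL2 : ∀ i, MemLp (X i) 2 μ) (hmean : ∀ i, ∫ ω, X i ω ∂μ = 0)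
    (hvar : ∀ i, ∫ ω, X i ω ^ 2 ∂μ = 1) (θ : ι → ℝ) :
    ∫ ω, (∑ j, θ j * X j ω) ^ 2 ∂μ = ∑ j, θ j ^ 2 := by
  classical
  simpa using integral_sq_sum_mul_eq_sum_sq_mul θ (fun _ ↦ 1) (fun _ ↦ 1)
    (fun j k ↦ by simpa [Pi.mul_def] using (hL2 j).integrable_mul (hL2 k))
    (fun j k ↦ by simpa using integral_mul_eq_ite hmeas hindep hmean hvar j k)

lemma integral_sq_sum_mul_mul_sq [Fintype ι] {m₄ : ℝ} (hmeas : ∀ i, Measurable (X i))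
    (hindep : iIndepFun X μ) (hL4 : ∀ i, MemLp (X i) 4 μ) (hmean : ∀ i, ∫ ω, X i ω ∂μ = 0)
    (hvar : ∀ i, ∫ ω, X i ω ^ 2 ∂μ = 1) (hfourth : ∀ i, ∫ ω, X i ω ^ 4 ∂μ = m₄)
    (θ : ι → ℝ) (i : ι) :
    ∫ ω, (∑ j, θ j * X j ω) ^ 2 * X i ω ^ 2 ∂μ = ∑ j, θ j ^ 2 + (m₄ - 1) * θ i ^ 2 := by
  classical
  have split : ∀ j, θ j ^ 2 * (if j = i then m₄ else 1)
      = θ j ^ 2 + if i = j then (m₄ - 1) * θ j ^ 2 else 0 := fun j ↦ by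
    rcases eq_or_ne j i with rfl | hji
    · rw [if_pos rfl, if_pos rfl]
      ring
    · simp [hji, hji.symm]
  rw [integral_sq_sum_mul_eq_sum_sq_mul θ (fun j ↦ if j = i then m₄ else 1) _
    (fun j k ↦ (hL4 j).integrable_mul_mul_sq (hL4 k) (hL4 i))
    (integral_mul_mul_sq_eq_ite hmeas hindep hmean hvar hfourth i),
    Finset.sum_congr rfl fun j _ ↦ split j, Finset.sum_add_distrib, Finset.sum_ite_eq]
  simp

lemma sum_sq_sub_mul_sum_mul [Fintype ι] (θ x : ι → ℝ) (η : ℝ) :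
    ∑ i, (θ i - η * (∑ j, θ j * x j) * x i) ^ 2
      = ∑ i, θ i ^ 2 - 2 * η * (∑ j, θ j * x j) ^ 2
        + η ^ 2 * ∑ i, (∑ j, θ j * x j) ^ 2 * x i ^ 2 := by
  set s := ∑ j, θ j * x j
  calc ∑ i, (θ i - η * s * x i) ^ 2
      = ∑ i, (θ i ^ 2 - 2 * η * s * (θ i * x i) + η ^ 2 * (s ^ 2 * x i ^ 2)) :=
        Finset.sum_congr rfl fun i _ ↦ by ring
    _ = _ := by
      rw [Finset.sum_add_distrib, Finset.sum_sub_distrib, ← Finset.mul_sum, ← Finset.mul_sum]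
      ring

theorem integral_sum_sq_sub_mul_sum_mul [Fintype ι] [IsProbabilityMeasure μ] {m₄ : ℝ}
    (hmeas : ∀ i, Measurable (X i))
    (hindep : iIndepFun X μ) (hL4 : ∀ i, MemLp (X i) 4 μ) (hmean : ∀ i, ∫ ω, X i ω ∂μ = 0)
    (hvar : ∀ i, ∫ ω, X i ω ^ 2 ∂μ = 1) (hfourth : ∀ i, ∫ ω, X i ω ^ 4 ∂μ = m₄)
    (θ : ι → ℝ) (η : ℝ) :
    ∫ ω, ∑ i, (θ i - η * (∑ j, θ j * X j ω) * X i ω) ^ 2 ∂μ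
      = (1 - 2 * η + η ^ 2 * (Fintype.card ι + m₄ - 1)) * ∑ i, θ i ^ 2 := by
  have hs : MemLp (fun ω ↦ ∑ j, θ j * X j ω) 4 μ :=
    memLp_finsetSum _ fun j _ ↦ (hL4 j).const_mul (θ j)
  have hs2 : Integrable (fun ω ↦ (∑ j, θ j * X j ω) ^ 2) μ :=
    (hs.mono_exponent (by norm_num)).integrable_sq
  have hs2X2 : ∀ i, Integrable (fun ω ↦ (∑ j, θ j * X j ω) ^ 2 * X i ω ^ 2) μ := fun i ↦
    (hs.integrable_mul_mul_sq hs (hL4 i)).congr (ae_of_all _ fun ω ↦ by ring)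
  have hlin : Integrable (fun ω ↦ ∑ i, θ i ^ 2 - 2 * η * (∑ j, θ j * X j ω) ^ 2) μ :=
    (integrable_const _).sub (hs2.const_mul _)
  simp_rw [sum_sq_sub_mul_sum_mul]
  rw [integral_add hlin ((integrable_finsetSum _ fun i _ ↦ hs2X2 i).const_mul _),
    integral_sub (integrable_const _) (hs2.const_mul _), integral_const, integral_const_mul,
    integral_const_mul, integral_finsetSum _ fun i _ ↦ hs2X2 i,
    integral_sq_sum_mul_eq_sum_sq hmeas hindep (fun i ↦ (hL4 i).mono_exponent (by norm_num))
      hmean hvar]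
  simp only [integral_sq_sum_mul_mul_sq hmeas hindep hL4 hmean hvar hfourth,
    Finset.sum_add_distrib]
  rw [probReal_univ, one_smul, Finset.sum_const, Finset.card_univ, nsmul_eq_mul,
    ← Finset.mul_sum]
  ring

end IndependentCoordinates

lemma deriv_mul_exp_mul_sq_div_two (a : ℝ) {p p' q : ℝ → ℝ} (hp : ∀ t, HasDerivAt p (p' t) t)
    (hq : ∀ t, p' t + a * t * p t = q t) :
    deriv (fun t ↦ p t * Real.exp (a * t ^ 2 / 2)) = fun t ↦ q t * Real.exp (a * t ^ 2 / 2) := by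
  ext t
  have he : HasDerivAt (fun t ↦ a * t ^ 2 / 2) (a * t) t :=
    (((hasDerivAt_pow 2 t).const_mul a).div_const 2).congr_deriv (by push_cast; ring)
  rw [((hp t).fun_mul he.exp).deriv, ← hq]
  ring

lemma iteratedDeriv_exp_mul_sq_div_two (a : ℝ) :
    iteratedDeriv 2 (fun t ↦ Real.exp (a * t ^ 2 / 2)) 0 = a ∧
    iteratedDeriv 4 (fun t ↦ Real.exp (a * t ^ 2 / 2)) 0 = 3 * a ^ 2 := by
  have d1 : deriv (fun t ↦ 1 * Real.exp (a * t ^ 2 / 2))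
      = fun t ↦ a * t * Real.exp (a * t ^ 2 / 2) :=
    deriv_mul_exp_mul_sq_div_two a (fun t ↦ hasDerivAt_const t 1) fun t ↦ by ring
  have d2 : deriv (fun t ↦ a * t * Real.exp (a * t ^ 2 / 2))
      = fun t ↦ (a + a ^ 2 * t ^ 2) * Real.exp (a * t ^ 2 / 2) :=
    deriv_mul_exp_mul_sq_div_two a (fun t ↦ (hasDerivAt_id t).const_mul a) fun t ↦ by
      simp only [mul_one]; ring
  have d3 : deriv (fun t ↦ (a + a ^ 2 * t ^ 2) * Real.exp (a * t ^ 2 / 2))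
      = fun t ↦ (3 * a ^ 2 * t + a ^ 3 * t ^ 3) * Real.exp (a * t ^ 2 / 2) :=
    deriv_mul_exp_mul_sq_div_two a
      (fun t ↦ ((hasDerivAt_pow 2 t).const_mul (a ^ 2)).const_add a) fun t ↦ by push_cast; ring
  have d4 : deriv (fun t ↦ (3 * a ^ 2 * t + a ^ 3 * t ^ 3) * Real.exp (a * t ^ 2 / 2))
      = fun t ↦ (3 * a ^ 2 + 6 * a ^ 3 * t ^ 2 + a ^ 4 * t ^ 4) * Real.exp (a * t ^ 2 / 2) :=
    deriv_mul_exp_mul_sq_div_two a (fun t ↦ ((hasDerivAt_id t).const_mul (3 * a ^ 2)).add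
      ((hasDerivAt_pow 3 t).const_mul (a ^ 3))) fun t ↦ by push_cast; simp only [mul_one]; ring
  rw [show (fun t ↦ Real.exp (a * t ^ 2 / 2)) = fun t ↦ 1 * Real.exp (a * t ^ 2 / 2) by simp]
  simp only [iteratedDeriv_eq_iterate, Function.iterate_succ_apply', Function.iterate_zero_apply,
    d1, d2, d3, d4]
  simp

lemma integral_pow_gaussianReal_zero_eq_iteratedDeriv (v : ℝ≥0) (k : ℕ) :
    ∫ x, x ^ k ∂gaussianReal 0 v = iteratedDeriv k (fun t ↦ Real.exp (v * t ^ 2 / 2)) 0 := by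
  have h := iteratedDeriv_mgf_zero (X := fun x ↦ x) (μ := gaussianReal 0 v) (by simp) k
  rw [mgf_fun_id_gaussianReal] at h
  simpa using h.symm

lemma integral_sq_gaussianReal_zero (v : ℝ≥0) : ∫ x, x ^ 2 ∂gaussianReal 0 v = v := by
  rw [integral_pow_gaussianReal_zero_eq_iteratedDeriv, (iteratedDeriv_exp_mul_sq_div_two v).1]

lemma integral_pow_four_gaussianReal_zero (v : ℝ≥0) :
    ∫ x, x ^ 4 ∂gaussianReal 0 v = 3 * (v : ℝ) ^ 2 := by
  rw [integral_pow_gaussianReal_zero_eq_iteratedDeriv, (iteratedDeriv_exp_mul_sq_div_two v).2]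

/-- For `f(θ) = ½‖θ‖²` (so `∇f(θ) = θ`), the forward gradient update
`θ' = θ − η (θ·v) v` with `v ~ N(0, I_n)` satisfies
`E[‖θ'‖²] = (1 − 2η + η²(n+2)) ‖θ‖²`; in particular for
`0 < η < 2/(n+2)` the iteration contracts in expectation. -/
theorem forward_gradient_quadratic_contraction
    {Ω : Type*} [MeasurableSpace Ω] {μ : Measure Ω} [IsProbabilityMeasure μ]
    {n : ℕ} (θ : Fin n → ℝ) (η : ℝ) (hη : 0 < η) (v : Ω → Fin n → ℝ)
    (hmeas : ∀ i, Measurable fun ω => v ω i)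
    (hindep : iIndepFun (m := fun _ => Real.measurableSpace) (fun i ω => v ω i) μ)
    (hlaw : ∀ i, Measure.map (fun ω => v ω i) μ = gaussianReal 0 1) :
    (∫ ω, ∑ i, (θ i - η * (∑ j, θ j * v ω j) * v ω i) ^ 2 ∂μ
        = (1 - 2 * η + η ^ 2 * ((n : ℝ) + 2)) * ∑ i, (θ i) ^ 2)
    ∧ (η < 2 / ((n : ℝ) + 2) → θ ≠ 0 →
        ∫ ω, ∑ i, (θ i - η * (∑ j, θ j * v ω j) * v ω i) ^ 2 ∂μ
          < ∑ i, (θ i) ^ 2) := by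
  have moment : ∀ i k, ∫ ω, v ω i ^ k ∂μ = ∫ x, x ^ k ∂gaussianReal 0 1 := fun i k ↦ by
    rw [← hlaw i, integral_map (hmeas i).aemeasurable (by fun_prop)]
  have hL4 : ∀ i, MemLp (fun ω ↦ v ω i) 4 μ := fun i ↦
    (memLp_map_measure_iff aestronglyMeasurable_id (hmeas i).aemeasurable).1
      (hlaw i ▸ memLp_id_gaussianReal 4)
  have expectation : ∫ ω, ∑ i, (θ i - η * (∑ j, θ j * v ω j) * v ω i) ^ 2 ∂μ
      = (1 - 2 * η + η ^ 2 * ((n : ℝ) + 2)) * ∑ i, (θ i) ^ 2 := by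
    rw [integral_sum_sq_sub_mul_sum_mul (m₄ := 3) hmeas hindep hL4
      (fun i ↦ by simpa using moment i 1)
      (fun i ↦ by simp [moment, integral_sq_gaussianReal_zero])
      (fun i ↦ by simp [moment, integral_pow_four_gaussianReal_zero]) θ η, Fintype.card_fin]
    ring
  refine ⟨expectation, fun hη2 hθ ↦ ?_⟩
  have hnorm : 0 < ∑ i, θ i ^ 2 := by
    obtain ⟨i, hi⟩ := Function.ne_iff.1 hθ
    exact Finset.sum_pos' (fun j _ ↦ sq_nonneg _)
      ⟨i, Finset.mem_univ i, pow_two_pos_of_ne_zero hi⟩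
  have hcoef : 1 - 2 * η + η ^ 2 * ((n : ℝ) + 2) < 1 := by
    have := (lt_div_iff₀ (by positivity)).1 hη2
    nlinarith
  rw [expectation]
  nlinarith
end
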